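/- arXiv:1805.05114 — 4 statements merged into one kernel-verified Lean document; each statement's English description precedes it below -/
import Mathlib

section
/- Let F be the Fibonacci sequence and G(n) = (n^2+1)(n^2+2). Then for every positive integer n, gcd(F(n), G(n)) = 1. -/
/-!
Write `a = n² + 1` and `b = n² + 2`, so `F n = a 5ⁿ + b 3ⁿ` and `G n = a b`. Since `b - a = 1`, a
common prime factor of `F n` and `a` would divide `3ⁿ`, and one of `F n` and `b` would divide `5ⁿ`.
Neither can happen: `-1` is not a square mod `3` and `-2` is not a square mod `5`.
-/

theorem IsCoprime.mul_add_mul_mul {R : Type*} [CommRing R] {a b u v : R}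
    (hab : IsCoprime a b) (hu : IsCoprime u b) (hv : IsCoprime v a) :
    IsCoprime (a * u + b * v) (a * b) := by
  refine IsCoprime.mul_right ?_ ?_
  · rw [IsCoprime.mul_add_left_left_iff]
    exact hab.symm.mul_left hv
  · rw [IsCoprime.add_mul_left_left_iff]
    exact hab.mul_left hu

theorem isCoprime_prime_pow_sq_add {p : ℕ} (hp : p.Prime) {c : ℤ}
    (hc : ∀ x : ZMod p, x ^ 2 + c ≠ 0) (m : ℤ) (k : ℕ) :
    IsCoprime ((p : ℤ) ^ k) (m ^ 2 + c) := by
  refine IsCoprime.pow_left ((Nat.prime_iff_prime_int.mp hp).coprime_iff_not_dvd.mpr ?_)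
  intro hdvd
  apply hc m
  exact_mod_cast (ZMod.intCast_zmod_eq_zero_iff_dvd _ p).mpr hdvd

theorem stmt_0 (F G : ℕ → ℤ)
    (hF : ∀ n, F n = (n ^ 2 + 1) * 5 ^ n + (n ^ 2 + 2) * 3 ^ n)
    (hG : ∀ n, G n = (n ^ 2 + 1) * (n ^ 2 + 2)) :
    ∀ n : ℕ, 0 < n → Int.gcd (F n) (G n) = 1 := by
  intro n _
  have h5 : IsCoprime ((5 : ℕ) ^ n : ℤ) ((n : ℤ) ^ 2 + 2) :=
    isCoprime_prime_pow_sq_add Nat.prime_five (by decide) _ n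
  have h3 : IsCoprime ((3 : ℕ) ^ n : ℤ) ((n : ℤ) ^ 2 + 1) :=
    isCoprime_prime_pow_sq_add Nat.prime_three (by decide) _ n
  rw [hF, hG, ← Int.isCoprime_iff_gcd_eq_one]
  exact IsCoprime.mul_add_mul_mul ⟨-1, 1, by ring⟩ (by exact_mod_cast h5) (by exact_mod_cast h3)
end

section
/- Let ρ : primes → ℕ satisfy ρ(p) ≤ D for all primes p and ρ(p) < p for all p, for some constant D. Then there is a constant c > 0 (depending on ρ and D) such that for all sufficiently large y, ∏_{p ≤ y} (1 − ρ(p)/p) ≥ c / (log y)^D. -/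
/-!
Taking logarithms, `log (1 - x) ≥ -x - 2x²` for `x ≤ 1/2` reduces the product over the primes
`p > 2D` to Mertens' bound `∑_{p ≤ y} 1/p ≤ log log y + O(1)` and to `∑ 1/p² ≤ 1`; the finitely
many primes `p ≤ 2D` only contribute a positive constant because `ρ(p) < p`. Mertens' bound
follows by summation by parts from `∑_{p ≤ n} log p / p ≤ log n + log 4`, which compares
Legendre's formula for `log n!` with `log n! ≤ n log n` and Chebyshev's bound `θ(n) ≤ n log 4`.
-/

open Finset Real
open scoped Nat

theorem div_le_factorization_factorial {p : ℕ} (hp : p.Prime) (n : ℕ) :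
    n / p ≤ (n !).factorization p := by
  rcases Nat.eq_zero_or_pos n with rfl | hn
  · simp
  rw [Nat.factorization_factorial hp ((Nat.log_lt_self p hn.ne').trans n.lt_succ_self)]
  simpa using single_le_sum (f := fun i => n / p ^ i) (fun _ _ => Nat.zero_le _)
    (mem_Ico.2 ⟨le_rfl, by omega⟩ : 1 ∈ Ico 1 (n + 1))

theorem log_factorial_eq_sum_primesLE (n : ℕ) :
    log (n ! : ℕ) = ∑ p ∈ Nat.primesLE n, (n !).factorization p * log p := by
  rw [log_nat_eq_sum_factorization, Finsupp.sum_of_support_subset _ _ _ (by simp)]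
  intro p hp
  rw [Nat.support_factorization, Nat.mem_primeFactors] at hp
  simp only [Nat.primesLE_eq_filter_range, mem_filter, mem_range]
  exact ⟨Nat.lt_succ_of_le (hp.1.dvd_factorial.1 hp.2.1), hp.1⟩

theorem sum_primesLE_log_div_le (n : ℕ) : ∑ p ∈ Nat.primesLE n, log p / p ≤ log n + log 4 := by
  rcases Nat.eq_zero_or_pos n with rfl | hn
  · simp [Nat.primesLE_zero, log_nonneg]
  have hn' : (0 : ℝ) < n := by exact_mod_cast hn
  have hfloor : ∀ p ∈ Nat.primesLE n, n * (log p / p) ≤ (n / p : ℕ) * log p + log p := by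
    intro p hp
    have : (n : ℝ) / p ≤ (n / p : ℕ) + 1 := by
      rw [← Nat.floor_div_eq_div (K := ℝ)]; exact (Nat.lt_floor_add_one _).le
    calc (n : ℝ) * (log p / p) = n / p * log p := by ring
      _ ≤ ((n / p : ℕ) + 1) * log p := by gcongr
      _ = _ := by ring
  have hlegendre : ∑ p ∈ Nat.primesLE n, ((n / p : ℕ) : ℝ) * log p ≤ n * log n := by
    calc ∑ p ∈ Nat.primesLE n, ((n / p : ℕ) : ℝ) * log p
        ≤ ∑ p ∈ Nat.primesLE n, ((n !).factorization p : ℝ) * log p := by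
          gcongr with p hp
          exact div_le_factorization_factorial (Nat.prime_of_mem_primesLE hp) n
      _ = log (n ! : ℕ) := (log_factorial_eq_sum_primesLE n).symm
      _ ≤ log ((n : ℝ) ^ n) := by
          gcongr
          exact_mod_cast n.factorial_le_pow
      _ = n * log n := log_pow n n
  have htheta : ∑ p ∈ Nat.primesLE n, log p ≤ n * log 4 := by
    rw [← Chebyshev.theta_eq_sum_primesLE_log, mul_comm]
    exact Chebyshev.theta_le_log4_mul_x hn'.le
  have hsum : n * ∑ p ∈ Nat.primesLE n, log p / p ≤
      ∑ p ∈ Nat.primesLE n, ((n / p : ℕ) : ℝ) * log p + ∑ p ∈ Nat.primesLE n, log p := by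
    rw [mul_sum, ← sum_add_distrib]
    exact sum_le_sum hfloor
  rw [← mul_le_mul_iff_right₀ hn']
  linarith

theorem mul_inv_sub_inv_le_log_sub {u v : ℝ} (C : ℝ) (hu : 0 < u) (huv : u ≤ v) :
    (u + C) * (u⁻¹ - v⁻¹) ≤ (log v - C / v) - (log u - C / u) := by
  have hv : 0 < v := hu.trans_le huv
  have key := one_sub_inv_le_log_of_pos (div_pos hv hu)
  rw [inv_div, log_div hv.ne' hu.ne'] at key
  have : (u + C) * (u⁻¹ - v⁻¹) = 1 - u / v + (C / u - C / v) := by field_simp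
  linarith

section SummationByParts

variable {a : ℕ → ℝ} {C : ℝ} {m : ℕ}

/- Passing from `y` to `y + 1` changes the left side by `A(y) (1 / log y - 1 / log (y + 1))`,
where `A(y) = ∑_{m ≤ k ≤ y} a k`; `mul_inv_sub_inv_le_log_sub` bounds this by the increment of
the right side. -/
theorem sum_div_log_sub_le_of_sum_le (hm : 2 ≤ m)
    (hA : ∀ n, m ≤ n → ∑ k ∈ Icc m n, a k ≤ log n + C) {y : ℕ} (hy : m ≤ y) :
    ∑ k ∈ Icc m y, a k / log k - (∑ k ∈ Icc m y, a k) / log y ≤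
      (log (log y) - C / log y) - (log (log m) - C / log m) := by
  induction y, hy using Nat.le_induction with
  | base => simp
  | succ n hn ih =>
    have hlog : 0 < log n := log_pos (by exact_mod_cast (show 1 < n by omega))
    have hmono : log n ≤ log (n + 1 : ℕ) :=
      log_le_log (by exact_mod_cast (show 0 < n by omega)) (by simp)
    have hstep := (mul_le_mul_of_nonneg_right (hA n hn) (sub_nonneg.2
      (inv_anti₀ hlog hmono))).trans (mul_inv_sub_inv_le_log_sub C hlog hmono)
    rw [sum_Icc_succ_top (by omega), sum_Icc_succ_top (by omega)]
    simp only [div_eq_mul_inv] at ih hstep ⊢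
    linarith

theorem sum_div_log_le_of_sum_le (hm : 2 ≤ m)
    (hA : ∀ n, m ≤ n → ∑ k ∈ Icc m n, a k ≤ log n + C) {y : ℕ} (hy : m ≤ y) :
    ∑ k ∈ Icc m y, a k / log k ≤ log (log y) + 1 - (log (log m) - C / log m) := by
  have hlog : 0 < log y := log_pos (by exact_mod_cast (show 1 < y by omega))
  have hA' : (∑ k ∈ Icc m y, a k) / log y ≤ 1 + C / log y := by
    rw [div_le_iff₀ hlog, add_mul, one_mul, div_mul_cancel₀ _ hlog.ne']
    linarith [hA y hy]
  linarith [sum_div_log_sub_le_of_sum_le hm hA hy]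

end SummationByParts

theorem sum_primesLE_inv_le {y : ℕ} (hy : 2 ≤ y) :
    ∑ p ∈ Nat.primesLE y, (p : ℝ)⁻¹ ≤ log (log y) + 3 - log (log 2) := by
  have hA : ∀ n : ℕ, 2 ≤ n →
      ∑ k ∈ Icc 2 n, (if k.Prime then log k / k else 0) ≤ log n + log 4 := fun n _ => by
    rw [← sum_filter, ← Nat.primesLE_eq_filter_Icc_two]
    exact sum_primesLE_log_div_le n
  have h := sum_div_log_le_of_sum_le le_rfl hA hy
  have hlog4 : log 4 = 2 * log 2 := by
    rw [show (4 : ℝ) = 2 ^ 2 by norm_num, log_pow]; norm_num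
  rw [Nat.primesLE_eq_filter_Icc_two, sum_filter]
  convert h using 1
  · refine sum_congr rfl fun k hk => ?_
    have : log k ≠ 0 := (log_pos (by exact_mod_cast (mem_Icc.1 hk).1)).ne'
    split_ifs
    · field_simp
    · simp
  · push_cast
    rw [hlog4]
    field_simp
    ring

theorem sum_primesLE_inv_sq_le_one (y : ℕ) : ∑ p ∈ Nat.primesLE y, ((p : ℝ) ^ 2)⁻¹ ≤ 1 := by
  refine (sum_le_sum_of_subset_of_nonneg (fun p hp => ?_) fun _ _ _ => by positivity).trans
    ((sum_Ioo_inv_sq_le 1 (y + 1)).trans_eq (by norm_num))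
  have := Nat.le_of_mem_primesLE hp
  exact mem_Ioo.2 ⟨(Nat.prime_of_mem_primesLE hp).one_lt, by omega⟩

theorem exp_neg_add_two_mul_sq_le_one_sub {x : ℝ} (hx : x ≤ 1 / 2) :
    exp (-(x + 2 * x ^ 2)) ≤ 1 - x := by
  have hx' : 0 < 1 - x := by linarith
  rw [← exp_log hx', exp_le_exp]
  have hlog := one_sub_inv_le_log_of_pos hx'
  have : x / (1 - x) ≤ x + 2 * x ^ 2 := by
    rw [div_le_iff₀ hx']
    nlinarith [sq_nonneg x]
  have : 1 - (1 - x)⁻¹ = -(x / (1 - x)) := by field_simp; ring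
  linarith

theorem exp_neg_sum_le_prod_one_sub {ι : Type*} (s : Finset ι) {x : ι → ℝ}
    (hx : ∀ i ∈ s, x i ≤ 1 / 2) :
    exp (-∑ i ∈ s, (x i + 2 * x i ^ 2)) ≤ ∏ i ∈ s, (1 - x i) := by
  rw [← sum_neg_distrib, exp_sum]
  exact prod_le_prod (fun _ _ => (exp_pos _).le) fun i hi =>
    exp_neg_add_two_mul_sq_le_one_sub (hx i hi)

theorem prod_primesLE_eq_mul_prod_filter_lt {M : Type*} [CommMonoid M] (f : ℕ → M) {m n : ℕ}
    (hmn : m ≤ n) :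
    ∏ p ∈ Nat.primesLE n, f p =
      (∏ p ∈ Nat.primesLE m, f p) * ∏ p ∈ Nat.primesLE n with m < p, f p := by
  rw [← prod_filter_mul_prod_filter_not (Nat.primesLE n) (· ≤ m)]
  simp only [not_le]
  congr 2
  ext p
  simp only [Nat.primesLE_eq_filter_range, mem_filter, mem_range]
  grind

theorem exp_neg_le_prod_filter_lt_one_sub_div (ρ : ℕ → ℕ) (D : ℕ)
    (hρD : ∀ p : ℕ, p.Prime → ρ p ≤ D) {y : ℕ} (hy : 2 ≤ y) :
    exp (-(D * (log (log y) + 3 - log (log 2)) + 2 * D ^ 2)) ≤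
      ∏ p ∈ Nat.primesLE y with 2 * D < p, (1 - (ρ p : ℝ) / p) := by
  refine (exp_le_exp.2 (neg_le_neg ?_)).trans (exp_neg_sum_le_prod_one_sub _ fun p hp => ?_)
  · calc ∑ p ∈ Nat.primesLE y with 2 * D < p, ((ρ p : ℝ) / p + 2 * ((ρ p : ℝ) / p) ^ 2)
        ≤ ∑ p ∈ Nat.primesLE y with 2 * D < p, ((D : ℝ) / p + 2 * ((D : ℝ) / p) ^ 2) := by
          gcongr with p hp <;> exact hρD p (Nat.prime_of_mem_primesLE (mem_filter.1 hp).1)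
      _ ≤ ∑ p ∈ Nat.primesLE y, ((D : ℝ) / p + 2 * ((D : ℝ) / p) ^ 2) :=
          sum_le_sum_of_subset_of_nonneg (filter_subset _ _) fun _ _ _ => by positivity
      _ = D * ∑ p ∈ Nat.primesLE y, (p : ℝ)⁻¹
            + 2 * D ^ 2 * ∑ p ∈ Nat.primesLE y, ((p : ℝ) ^ 2)⁻¹ := by
          rw [sum_add_distrib, mul_sum, mul_sum]
          congr 1
          exact sum_congr rfl fun p _ => by ring
      _ ≤ D * (log (log y) + 3 - log (log 2)) + 2 * D ^ 2 * 1 := by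
          gcongr
          · exact sum_primesLE_inv_le hy
          · exact sum_primesLE_inv_sq_le_one y
      _ = _ := by ring
  · obtain ⟨hp, hDp⟩ := mem_filter.1 hp
    have hp0 : (0 : ℝ) < p := by exact_mod_cast (Nat.prime_of_mem_primesLE hp).pos
    rw [div_le_iff₀ hp0]
    have : (ρ p : ℝ) ≤ D := by exact_mod_cast hρD p (Nat.prime_of_mem_primesLE hp)
    have : (2 * D : ℝ) < p := by exact_mod_cast hDp
    linarith

theorem stmt_12 (ρ : ℕ → ℕ) (D : ℕ)
    (hρD : ∀ p : ℕ, p.Prime → ρ p ≤ D)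
    (hρp : ∀ p : ℕ, p.Prime → ρ p < p) :
    ∃ c : ℝ, 0 < c ∧ ∃ y₀ : ℕ, ∀ y : ℕ, y₀ ≤ y →
      c / (Real.log y) ^ D ≤
        ∏ p ∈ (Finset.range (y + 1)).filter Nat.Prime, (1 - (ρ p : ℝ) / p) := by
  set Q := ∏ p ∈ Nat.primesLE (2 * D), (1 - (ρ p : ℝ) / p)
  have hQ : 0 < Q := prod_pos fun p hp => by
    have hp := Nat.prime_of_mem_primesLE hp
    exact sub_pos.2 ((div_lt_one (by exact_mod_cast hp.pos)).2 (by exact_mod_cast hρp p hp))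
  refine ⟨Q * exp (-(D * (3 - log (log 2)) + 2 * D ^ 2)), by positivity, 2 * D + 2,
    fun y hy => ?_⟩
  have hlog : 0 < log y := log_pos (by exact_mod_cast (show 1 < y by omega))
  calc Q * exp (-(D * (3 - log (log 2)) + 2 * D ^ 2)) / log y ^ D
      = Q * exp (-(D * (log (log y) + 3 - log (log 2)) + 2 * D ^ 2)) := by
        rw [← exp_log hlog, ← exp_nat_mul, log_exp, mul_div_assoc, ← exp_sub]
        ring_nf
    _ ≤ Q * ∏ p ∈ Nat.primesLE y with 2 * D < p, (1 - (ρ p : ℝ) / p) := by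
        gcongr
        exact exp_neg_le_prod_filter_lt_one_sub_div ρ D hρD (by omega)
    _ = ∏ p ∈ Nat.primesLE y, (1 - (ρ p : ℝ) / p) :=
        (prod_primesLE_eq_mul_prod_filter_lt _ (by omega)).symm
end

section
/- Let r ≥ 1 and γ = 1/(r+1), and suppose P is a set of primes with counting function #P(x) ≪ x^{rγ}/log x for x ≥ 2^{1/γ}, and T : primes → ℕ ∪ {∞} satisfies T(p) ≥ p^γ for all primes p ∉ P. Then for all sufficiently large y, ∑_{p > y} 1/(p·T(p)) ≪ y^{−1/(r+1)}. -/
/-!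
Split the primes `p > y` according to `p ∈ P`. Off `P`, `1 / (p T(p)) ≤ p ^ (-1 - γ)`, and
comparison with `∫_y^∞ x ^ (-1 - γ) dx` bounds the tail by `y ^ (-γ) / γ`. On `P` we only use
`T(p) ≥ 1`: since `r γ = 1 - γ`, the counting hypothesis gives `#P(n) ≤ C n ^ (1 - γ)` once
`log n ≥ 1`, and partial summation turns `∑_{p ∈ P, p > y} 1 / p` into
`∑_{n > y} #P(n) / (n (n + 1))` plus a boundary term, which is at most `C (1 + 1 / γ) y ^ (-γ)`.
Bounding every finite partial sum gives both summability and the bound on the sum.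
-/

open Finset Real

lemma sum_rpow_neg_one_sub_le_of_lt {γ : ℝ} (hγ : 0 < γ) {y : ℕ} (hy : 1 ≤ y) {u : Finset ℕ}
    (hu : ∀ n ∈ u, y < n) :
    ∑ n ∈ u, (n : ℝ) ^ (-1 - γ) ≤ (y : ℝ) ^ (-γ) / γ := by
  set M := y + u.sup id
  have hy0 : (0 : ℝ) < y := by exact_mod_cast hy
  have hyM : (y : ℝ) ≤ M := by simp [M]
  calc ∑ n ∈ u, (n : ℝ) ^ (-1 - γ)
      ≤ ∑ n ∈ Ico y M, ((n + 1 : ℕ) : ℝ) ^ (-1 - γ) := by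
        rw [sum_Ico_add' (fun n : ℕ => (n : ℝ) ^ (-1 - γ))]
        refine sum_le_sum_of_subset_of_nonneg (fun n hn => ?_) (fun _ _ _ => by positivity)
        have hnM : n ≤ u.sup id := le_sup (f := id) hn
        have := hu n hn
        simp only [mem_Ico]
        omega
    _ ≤ ∫ x in (y : ℝ)..M, x ^ (-1 - γ) :=
        AntitoneOn.sum_le_integral_Ico (by simp [M])
          ((antitoneOn_rpow_Ioi_of_exponent_nonpos (by linarith)).mono
            fun x hx => hy0.trans_le hx.1)
    _ = ((y : ℝ) ^ (-γ) - (M : ℝ) ^ (-γ)) / γ := by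
        rw [integral_rpow (Or.inr ⟨by linarith, fun h => ?_⟩)]
        · rw [show -1 - γ + 1 = -γ by ring, div_neg, ← neg_div, neg_sub]
        · rw [Set.uIcc_of_le hyM] at h
          exact h.1.not_gt hy0
    _ ≤ (y : ℝ) ^ (-γ) / γ := by
        gcongr
        exact sub_le_self _ (by positivity)

lemma sum_eq_card_mul_add_sum_card_filter_mul (f : ℕ → ℝ) {y M : ℕ} {u : Finset ℕ}
    (hu : ∀ p ∈ u, y < p ∧ p ≤ M) :
    ∑ p ∈ u, f p =
      #u * f M + ∑ n ∈ Ico (y + 1) M, #{p ∈ u | p ≤ n} * (f n - f (n + 1)) := by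
  have telescope : ∀ p ∈ u, f p = f M + ∑ n ∈ Ico p M, (f n - f (n + 1)) := by
    intro p hp
    have := sum_Ico_sub (-f) (hu p hp).2
    simp only [Pi.neg_apply, neg_sub_neg] at this
    linarith
  rw [sum_congr rfl telescope, sum_add_distrib, sum_const, nsmul_eq_mul,
    sum_comm' (t' := Ico (y + 1) M) (s' := fun n => {p ∈ u | p ≤ n})]
  · simp only [sum_const, nsmul_eq_mul]
  · intro p n
    simp only [mem_Ico, mem_filter]
    constructor
    · rintro ⟨hp, hpn, hnM⟩
      have := (hu p hp).1
      exact ⟨⟨hp, hpn⟩, by omega, hnM⟩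
    · rintro ⟨⟨hp, hpn⟩, -, hnM⟩
      exact ⟨hp, hpn, hnM⟩

lemma inv_sub_inv_succ_le {x : ℝ} (hx : 0 < x) : x⁻¹ - (x + 1)⁻¹ ≤ x⁻¹ / x := by
  rw [inv_sub_inv hx.ne' (by positivity), add_sub_cancel_left, inv_eq_one_div, div_div]
  gcongr
  linarith

lemma sum_inv_le_of_card_filter_le {γ A : ℝ} (hγ : 0 < γ) (hA : 0 ≤ A) {y : ℕ} (hy : 1 ≤ y)
    {u : Finset ℕ} (hu : ∀ p ∈ u, y < p)
    (hcard : ∀ n : ℕ, y ≤ n → (#{p ∈ u | p ≤ n} : ℝ) ≤ A * (n : ℝ) ^ (1 - γ)) :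
    ∑ p ∈ u, (p : ℝ)⁻¹ ≤ (A + A / γ) * (y : ℝ) ^ (-γ) := by
  set M := y + u.sup id
  have huM : ∀ p ∈ u, y < p ∧ p ≤ M := fun p hp =>
    ⟨hu p hp, (le_sup (f := id) hp).trans (Nat.le_add_left _ _)⟩
  have hy0 : (0 : ℝ) < y := by exact_mod_cast hy
  have hyM : (y : ℝ) ≤ M := by simp [M]
  have boundary : #u * (M : ℝ)⁻¹ ≤ A * (y : ℝ) ^ (-γ) := by
    have hcardM : (#u : ℝ) ≤ A * (M : ℝ) ^ (1 - γ) := by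
      rw [← filter_true_of_mem fun p hp => (huM p hp).2]
      exact hcard M (by omega)
    calc #u * (M : ℝ)⁻¹ ≤ A * (M : ℝ) ^ (1 - γ) * (M : ℝ)⁻¹ :=
        mul_le_mul_of_nonneg_right hcardM (by positivity)
      _ = A * (M : ℝ) ^ (-γ) := by
        rw [mul_assoc, ← div_eq_mul_inv, ← rpow_sub_one (hy0.trans_le hyM).ne']
        ring_nf
      _ ≤ A * (y : ℝ) ^ (-γ) :=
        mul_le_mul_of_nonneg_left (rpow_le_rpow_of_nonpos hy0 hyM (by linarith)) hA
  have bulk : ∀ n ∈ Ico (y + 1) M,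
      #{p ∈ u | p ≤ n} * ((n : ℝ)⁻¹ - ((n + 1 : ℕ) : ℝ)⁻¹) ≤ A * (n : ℝ) ^ (-1 - γ) := by
    intro n hn
    have hn0 : (0 : ℝ) < n := by
      have := (mem_Ico.1 hn).1
      exact_mod_cast (by omega : 0 < n)
    calc #{p ∈ u | p ≤ n} * ((n : ℝ)⁻¹ - ((n + 1 : ℕ) : ℝ)⁻¹)
        ≤ A * (n : ℝ) ^ (1 - γ) * ((n : ℝ)⁻¹ / n) := by
          push_cast
          gcongr
          · exact sub_nonneg.2 (inv_anti₀ hn0 (by linarith))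
          · exact hcard n (by have := (mem_Ico.1 hn).1; omega)
          · exact inv_sub_inv_succ_le hn0
      _ = A * (n : ℝ) ^ (-1 - γ) := by
          rw [show -1 - γ = 1 - γ - 1 - 1 by ring, rpow_sub_one hn0.ne', rpow_sub_one hn0.ne']
          ring
  rw [sum_eq_card_mul_add_sum_card_filter_mul _ huM]
  calc _ ≤ A * (y : ℝ) ^ (-γ) + A * ((y : ℝ) ^ (-γ) / γ) := by
        gcongr
        refine (sum_le_sum bulk).trans ?_
        rw [← mul_sum]
        gcongr
        exact sum_rpow_neg_one_sub_le_of_lt hγ hy fun n hn => by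
          have := (mem_Ico.1 hn).1; omega
    _ = (A + A / γ) * (y : ℝ) ^ (-γ) := by ring

lemma one_div_mul_le_rpow_of_rpow_le {p T γ : ℝ} (hp : 0 < p) (hT : p ^ γ ≤ T) :
    1 / (p * T) ≤ p ^ (-1 - γ) := by
  calc 1 / (p * T) ≤ 1 / (p * p ^ γ) :=
        one_div_le_one_div_of_le (by positivity) (mul_le_mul_of_nonneg_left hT hp.le)
    _ = p ^ (-1 - γ) := by
      rw [show -1 - γ = -(1 + γ) by ring, rpow_neg hp.le, rpow_add hp, rpow_one, one_div]

lemma sum_one_div_mul_le (P : Set ℕ) [DecidablePred (· ∈ P)] {γ : ℝ} (T : ℕ → ℝ) {v : Finset ℕ}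
    (hv : ∀ p ∈ v, 0 < p) (hT1 : ∀ p ∈ v, 1 ≤ T p) (hT : ∀ p ∈ v, p ∉ P → (p : ℝ) ^ γ ≤ T p) :
    ∑ p ∈ v, 1 / (p * T p) ≤ ∑ p ∈ v with p ∈ P, (p : ℝ)⁻¹ + ∑ p ∈ v, (p : ℝ) ^ (-1 - γ) := by
  rw [sum_filter, ← sum_add_distrib]
  refine sum_le_sum fun p hp => ?_
  have hp0 : (0 : ℝ) < p := by exact_mod_cast hv p hp
  split_ifs with hP
  · have : 1 / (p * T p) ≤ (p : ℝ)⁻¹ := by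
      rw [one_div]
      exact inv_anti₀ hp0 (le_mul_of_one_le_right hp0.le (hT1 p hp))
    linarith [rpow_nonneg hp0.le (-1 - γ)]
  · rw [zero_add]
    exact one_div_mul_le_rpow_of_rpow_le hp0 (hT p hp hP)

lemma card_filter_le_ncard_inter_Iic (P : Set ℕ) [DecidablePred (· ∈ P)] (v : Finset ℕ) (n : ℕ) :
    #{p ∈ {p ∈ v | p ∈ P} | p ≤ n} ≤ (P ∩ Set.Iic n).ncard := by
  rw [← Set.ncard_coe_finset]
  refine Set.ncard_le_ncard (fun p hp => ?_) ((Set.finite_Iic n).inter_of_right _)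
  rw [coe_filter] at hp
  obtain ⟨hpv, hpn⟩ := hp
  exact ⟨(mem_filter.1 hpv).2, hpn⟩

lemma summable_subtype_and_tsum_le_of_sum_le {α : Type*} {q : α → Prop} {f : α → ℝ} {c : ℝ}
    (hf : ∀ a, q a → 0 ≤ f a) (h : ∀ v : Finset α, (∀ a ∈ v, q a) → ∑ a ∈ v, f a ≤ c) :
    Summable (fun x : {a // q a} => f x) ∧ ∑' x : {a // q a}, f x ≤ c := by
  have h' : ∀ u : Finset {a // q a}, ∑ x ∈ u, f x ≤ c := fun u => by
    simpa [sum_map] using h (u.map (Function.Embedding.subtype q)) fun a ha => by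
      obtain ⟨x, -, rfl⟩ := mem_map.1 ha
      exact x.2
  exact ⟨summable_of_sum_le (fun x => hf x x.2) h', Real.tsum_le_of_sum_le (fun x => hf x x.2) h'⟩

lemma ncard_inter_Iic_le_rpow {r : ℕ} {γ C : ℝ} (hγ : γ = 1 / (r + 1)) (hC : 0 ≤ C) {P : Set ℕ}
    (hPcount : ∀ x : ℕ, (2 : ℝ) ^ (1 / γ) ≤ x →
      ((P ∩ Set.Iic x).ncard : ℝ) ≤ C * (x : ℝ) ^ (r * γ) / Real.log x)
    {n : ℕ} (hn : 2 ^ (r + 2) ≤ n) :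
    ((P ∩ Set.Iic n).ncard : ℝ) ≤ C * (n : ℝ) ^ (1 - γ) := by
  have hrγ : (r : ℝ) * γ = 1 - γ := by rw [hγ]; field_simp; ring
  have h2n : (2 : ℝ) ^ (1 / γ) ≤ n := by
    rw [hγ, one_div_one_div]
    exact_mod_cast (Nat.pow_le_pow_right two_pos (by omega)).trans hn
  have hn4 : (4 : ℝ) ≤ n := by
    exact_mod_cast (Nat.pow_le_pow_right two_pos (by omega) : 2 ^ 2 ≤ 2 ^ (r + 2)).trans hn
  have hlog : 1 ≤ Real.log n := by
    rw [le_log_iff_exp_le (by linarith)]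
    linarith [exp_one_lt_d9]
  rw [← hrγ]
  exact (hPcount n h2n).trans (div_le_self (by positivity) hlog)

theorem stmt_13_general (r : ℕ) (γ : ℝ) (hγ : γ = 1 / (r + 1))
    (P : Set ℕ)
    (C : ℝ) (hC : 0 < C)
    (hPcount : ∀ x : ℕ, (2 : ℝ) ^ (1 / γ) ≤ x →
      ((P ∩ Set.Iic x).ncard : ℝ) ≤ C * (x : ℝ) ^ (r * γ) / Real.log x)
    (T : ℕ → ℝ) (hT1 : ∀ p, 1 ≤ T p)
    (hT : ∀ p : ℕ, p.Prime → p ∉ P → (p : ℝ) ^ γ ≤ T p) :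
    ∃ C' : ℝ, 0 < C' ∧ ∃ y₀ : ℕ, ∀ y : ℕ, y₀ ≤ y →
      Summable (fun p : {p : ℕ // p.Prime ∧ y < p} => 1 / ((p : ℝ) * T p)) ∧
      ∑' p : {p : ℕ // p.Prime ∧ y < p}, 1 / ((p : ℝ) * T p) ≤ C' * (y : ℝ) ^ (-γ) := by
  classical
  have hγ0 : 0 < γ := by rw [hγ]; positivity
  refine ⟨C + C / γ + 1 / γ, by positivity, 2 ^ (r + 2), fun y hy => ?_⟩
  have hy1 : 1 ≤ y := Nat.one_le_two_pow.trans hy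
  have hT0 : ∀ p, 0 ≤ T p := fun p => zero_le_one.trans (hT1 p)
  refine summable_subtype_and_tsum_le_of_sum_le
    (fun p _ => one_div_nonneg.2 (mul_nonneg p.cast_nonneg (hT0 p))) fun v hv => ?_
  calc ∑ p ∈ v, 1 / ((p : ℝ) * T p)
      ≤ ∑ p ∈ v with p ∈ P, (p : ℝ)⁻¹ + ∑ p ∈ v, (p : ℝ) ^ (-1 - γ) :=
        sum_one_div_mul_le P T (fun p hp => (hv p hp).1.pos) (fun p _ => hT1 p)
          fun p hp => hT p (hv p hp).1
    _ ≤ (C + C / γ) * (y : ℝ) ^ (-γ) + (y : ℝ) ^ (-γ) / γ :=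
        add_le_add
          (sum_inv_le_of_card_filter_le hγ0 hC.le hy1
            (fun p hp => (hv p (mem_filter.1 hp).1).2)
            fun n hn => (Nat.cast_le.2 (card_filter_le_ncard_inter_Iic P v n)).trans
              (ncard_inter_Iic_le_rpow hγ hC.le hPcount (hy.trans hn)))
          (sum_rpow_neg_one_sub_le_of_lt hγ0 hy1 fun p hp => (hv p hp).2)
    _ = (C + C / γ + 1 / γ) * (y : ℝ) ^ (-γ) := by ring

theorem stmt_13 (r : ℕ) (hr : 1 ≤ r) (γ : ℝ) (hγ : γ = 1 / (r + 1))
    (P : Set ℕ) (hP : ∀ p ∈ P, Nat.Prime p)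
    (C : ℝ) (hC : 0 < C)
    (hPcount : ∀ x : ℕ, (2 : ℝ) ^ (1 / γ) ≤ x →
      ((P ∩ Set.Iic x).ncard : ℝ) ≤ C * (x : ℝ) ^ (r * γ) / Real.log x)
    (T : ℕ → ℝ) (hT1 : ∀ p, 1 ≤ T p)
    (hT : ∀ p : ℕ, p.Prime → p ∉ P → (p : ℝ) ^ γ ≤ T p) :
    ∃ C' : ℝ, 0 < C' ∧ ∃ y₀ : ℕ, ∀ y : ℕ, y₀ ≤ y →
      Summable (fun p : {p : ℕ // p.Prime ∧ y < p} => 1 / ((p : ℝ) * T p)) ∧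
      ∑' p : {p : ℕ // p.Prime ∧ y < p}, 1 / ((p : ℝ) * T p) ≤ C' * (y : ℝ) ^ (-γ) :=
  stmt_13_general r γ hγ P C hC hPcount T hT1 hT
end

section
/- Let F be the Fibonacci sequence and z(p) the least positive integer n with p ∣ F(n) (the rank of apparition). Then for every prime p, z(p) ≤ p + 1. -/
/-!
The map `[a : b] ↦ [b : a + b]` is a permutation of the projective line `ℙ¹(K)` over a finite
field `K`, and it sends `[F n : F (n + 1)]` to `[F (n + 1) : F (n + 2)]`. The minimal period `n` of
the point `[F 0 : F 1] = [0 : 1]` is therefore positive, satisfies `[F n : F (n + 1)] = [0 : 1]`,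
i.e. `F n = 0` in `K`, and is at most `#ℙ¹(K) = #K + 1`.
-/

open scoped LinearAlgebra.Projectivization

open Projectivization

theorem Nat.fib_cast_pair_ne_zero {K : Type*} [Field K] (n : ℕ) :
    ((fib n : K), (fib (n + 1) : K)) ≠ 0 := by
  intro h
  have hcop : IsCoprime (fib n : ℤ) (fib (n + 1) : ℤ) :=
    Nat.isCoprime_iff_coprime.mpr (fib_coprime_fib_succ n)
  have hcopK := hcop.map (Int.castRingHom K)
  simp only [eq_intCast, Int.cast_natCast] at hcopK
  rw [Prod.mk_eq_zero] at h
  rw [h.1, h.2] at hcopK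
  exact not_isCoprime_zero_zero hcopK

section FibonacciProjectiveLine

variable (K : Type*) [Field K]

def fibStep : K × K →ₗ[K] K × K :=
  (LinearMap.snd K K K).prod (LinearMap.fst K K K + LinearMap.snd K K K)

variable {K} in
@[simp]
theorem fibStep_apply (v : K × K) : fibStep K v = (v.2, v.1 + v.2) := rfl

theorem fibStep_injective : Function.Injective (fibStep K) := by
  rintro ⟨a, b⟩ ⟨c, d⟩ h
  simp only [fibStep_apply, Prod.mk.injEq] at h
  obtain ⟨rfl, h⟩ := h
  rw [add_right_cancel h]

def fibPoint (n : ℕ) : ℙ K (K × K) :=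
  mk K ((Nat.fib n : K), (Nat.fib (n + 1) : K)) (Nat.fib_cast_pair_ne_zero n)

theorem map_fibStep_fibPoint (n : ℕ) :
    map (fibStep K) (fibStep_injective K) (fibPoint K n) = fibPoint K (n + 1) := by
  simp only [fibPoint, map_mk, fibStep_apply]
  congr 2
  rw [Nat.fib_add_two, Nat.cast_add]

theorem iterate_map_fibStep_fibPoint_zero (n : ℕ) :
    (map (fibStep K) (fibStep_injective K))^[n] (fibPoint K 0) = fibPoint K n := by
  induction n with
  | zero => rfl
  | succ n ih => rw [Function.iterate_succ_apply', ih, map_fibStep_fibPoint]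

variable {K} in
theorem fib_cast_eq_zero_of_fibPoint_eq_fibPoint_zero {n : ℕ} (h : fibPoint K n = fibPoint K 0) :
    (Nat.fib n : K) = 0 := by
  obtain ⟨a, ha⟩ := (mk_eq_mk_iff' K _ _ _ _).mp h
  simpa using (congrArg Prod.fst ha).symm

theorem exists_fib_cast_eq_zero_le_card_add_one [Finite K] :
    ∃ n, 0 < n ∧ (Nat.fib n : K) = 0 ∧ n ≤ Nat.card K + 1 := by
  let shift := map (fibStep K) (fibStep_injective K)
  have hinj : Function.Injective shift := map_injective _ _
  have := Fintype.ofFinite (ℙ K (K × K))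
  refine ⟨Function.minimalPeriod shift (fibPoint K 0),
    Function.minimalPeriod_pos_of_mem_periodicPts (hinj.mem_periodicPts _), ?_, ?_⟩
  · apply fib_cast_eq_zero_of_fibPoint_eq_fibPoint_zero
    rw [← iterate_map_fibStep_fibPoint_zero]
    exact Function.isPeriodicPt_minimalPeriod _ _
  · rw [← card_of_finrank_two K (K × K) (by simp), ← Fintype.card_eq_nat_card]
    exact Function.minimalPeriod_le_card

end FibonacciProjectiveLine

theorem stmt_15 (p : ℕ) (hp : p.Prime) :
    sInf {n : ℕ | 0 < n ∧ p ∣ Nat.fib n} ≤ p + 1 := by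
  have := Fact.mk hp
  obtain ⟨n, hn_pos, hn_fib, hn_le⟩ := exists_fib_cast_eq_zero_le_card_add_one (ZMod p)
  rw [ZMod.natCast_eq_zero_iff] at hn_fib
  rw [Nat.card_zmod] at hn_le
  exact le_trans (Nat.sInf_le ⟨hn_pos, hn_fib⟩) hn_le
end
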